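/- Let u, p ∈ ℝ³ with ‖u‖ = 1 and let r > 0 with ‖p‖ < r. Then ‖r • u - p‖ = r * sqrt(1 - 2⟪u,p⟫/r + ‖p‖²/r²), and the second-order Taylor (Fresnel) approximation satisfies | ‖r • u - p‖ - ( r - ⟪u,p⟫ + (‖p‖² - ⟪u,p⟫²)/(2r) ) | ≤ C * ‖p‖³ / r², for some constant C independent of p, r (valid uniformly whenever ‖p‖/r ≤ 1/2). -/

import Mathlib

open RealInnerProductSpace

set_option maxHeartbeats 1000000 in
private lemma stmt14_core (a b r S : ℝ) (hb0 : 0 ≤ b) (hab1 : -b ≤ a) (hab2 : a ≤ b)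
    (hr : 0 < r) (hbr : b ≤ r / 2) (hS0 : 0 ≤ S)
    (hS2 : S ^ 2 = r ^ 2 - 2 * r * a + b ^ 2) :
    |S - (r - a + (b ^ 2 - a ^ 2) / (2 * r))| ≤ 3 * b ^ 3 / r ^ 2 := by
  obtain ⟨Q, hQdef⟩ : ∃ Q : ℝ, Q = r - a + (b ^ 2 - a ^ 2) / (2 * r) := ⟨_, rfl⟩
  rw [← hQdef]
  have hc : 0 ≤ b ^ 2 - a ^ 2 := by nlinarith
  have hQ : r / 2 ≤ Q := by
    have h1 : 0 ≤ (b ^ 2 - a ^ 2) / (2 * r) := div_nonneg hc (by linarith)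
    rw [hQdef]; linarith
  have hkey : (S - Q) * (S + Q) = S ^ 2 - Q ^ 2 := by ring
  have hD : (S ^ 2 - Q ^ 2) * (4 * r ^ 2) = 4 * r * (a * (b ^ 2 - a ^ 2))
      - (b ^ 2 - a ^ 2) ^ 2 := by
    rw [hQdef, hS2]; field_simp; ring
  have h2 : a * (b ^ 2 - a ^ 2) ≤ b * (b ^ 2 - a ^ 2) :=
    mul_le_mul_of_nonneg_right hab2 hc
  have h3 : -(b * (b ^ 2 - a ^ 2)) ≤ a * (b ^ 2 - a ^ 2) := by nlinarith
  have h4 : b * (b ^ 2 - a ^ 2) ≤ b ^ 3 := by nlinarith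
  have h5 : (b ^ 2 - a ^ 2) ^ 2 ≤ b ^ 4 := by nlinarith
  have h6 : b ^ 4 ≤ r / 2 * b ^ 3 := by nlinarith [pow_nonneg hb0 3]
  have hrb3 : 0 ≤ r * b ^ 3 := mul_nonneg hr.le (pow_nonneg hb0 3)
  have h1' : |(S ^ 2 - Q ^ 2) * (4 * r ^ 2)| ≤ 9 / 2 * (r * b ^ 3) := by
    rw [hD, abs_le]
    constructor
    · nlinarith [mul_le_mul_of_nonneg_left h3 hr.le, sq_nonneg (b ^ 2 - a ^ 2)]
    · nlinarith [mul_le_mul_of_nonneg_left (h2.trans h4) hr.le,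
        sq_nonneg (b ^ 2 - a ^ 2)]
  have h7 : |S ^ 2 - Q ^ 2| * (4 * r ^ 2) ≤ 9 / 2 * (r * b ^ 3) := by
    calc |S ^ 2 - Q ^ 2| * (4 * r ^ 2) = |(S ^ 2 - Q ^ 2) * (4 * r ^ 2)| := by
          rw [abs_mul, abs_of_pos (by positivity : (0:ℝ) < 4 * r ^ 2)]
      _ ≤ 9 / 2 * (r * b ^ 3) := h1'
  have hSQ : 0 < S + Q := by linarith
  have habs : |S - Q| * (S + Q) = |S ^ 2 - Q ^ 2| := by
    rw [← abs_of_pos hSQ, ← abs_mul, hkey]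
  have h8 : |S - Q| * (r / 2) ≤ |S ^ 2 - Q ^ 2| := by
    calc |S - Q| * (r / 2) ≤ |S - Q| * (S + Q) :=
          mul_le_mul_of_nonneg_left (by linarith) (abs_nonneg _)
      _ = |S ^ 2 - Q ^ 2| := habs
  rw [le_div_iff₀ (by positivity : (0:ℝ) < r ^ 2)]
  nlinarith [mul_le_mul_of_nonneg_right h8 (by positivity : (0:ℝ) ≤ 4 * r),
    abs_nonneg (S - Q), mul_pos hr hr]

theorem stmt14 :
    ∃ C > 0, ∀ (u p : EuclideanSpace ℝ (Fin 3)) (r : ℝ),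
      ‖u‖ = 1 → 0 < r → ‖p‖ < r → ‖p‖ / r ≤ 1 / 2 →
        ‖r • u - p‖ = r * Real.sqrt (1 - 2 * ⟪u, p⟫ / r + ‖p‖ ^ 2 / r ^ 2) ∧
        |‖r • u - p‖ - (r - ⟪u, p⟫ + (‖p‖ ^ 2 - ⟪u, p⟫ ^ 2) / (2 * r))|
          ≤ C * ‖p‖ ^ 3 / r ^ 2 := by
  refine ⟨3, by norm_num, fun u p r hu hr hpr hhalf => ?_⟩
  have hab : |⟪u, p⟫| ≤ ‖p‖ := by
    calc |⟪u, p⟫| ≤ ‖u‖ * ‖p‖ := abs_real_inner_le_norm u p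
    _ = ‖p‖ := by rw [hu, one_mul]
  obtain ⟨hab1, hab2⟩ := abs_le.mp hab
  have hbr : ‖p‖ ≤ r / 2 := by
    rw [div_le_iff₀ hr] at hhalf; linarith
  have hN2 : ‖r • u - p‖ ^ 2 = r ^ 2 - 2 * r * ⟪u, p⟫ + ‖p‖ ^ 2 := by
    rw [norm_sub_sq_real, norm_smul, real_inner_smul_left, hu, Real.norm_eq_abs,
      abs_of_pos hr]
    ring
  have hNy : ‖r • u - p‖ = Real.sqrt (r ^ 2 - 2 * r * ⟪u, p⟫ + ‖p‖ ^ 2) := by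
    rw [← Real.sqrt_sq (norm_nonneg (r • u - p)), hN2]
  have hsq : Real.sqrt (r ^ 2 - 2 * r * ⟪u, p⟫ + ‖p‖ ^ 2)
      = r * Real.sqrt (1 - 2 * ⟪u, p⟫ / r + ‖p‖ ^ 2 / r ^ 2) := by
    rw [show r ^ 2 - 2 * r * ⟪u, p⟫ + ‖p‖ ^ 2
        = r ^ 2 * (1 - 2 * ⟪u, p⟫ / r + ‖p‖ ^ 2 / r ^ 2) from by field_simp,
      Real.sqrt_mul (sq_nonneg r), Real.sqrt_sq hr.le]
  refine ⟨by rw [hNy, hsq], ?_⟩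
  exact stmt14_core ⟪u, p⟫ ‖p‖ r ‖r • u - p‖ (norm_nonneg p) hab1 hab2 hr hbr
    (norm_nonneg _) hN2
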